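/- The function σ : (0,∞) → ℝ defined by σ(r) = √(r^{2/3}+2)/r + √((r^{2/3}+2)/(r^{2/3}+1)) is strictly decreasing on (0,∞); in particular σ(r) ≤ σ(1) = √3 + √(3/2) for all r ≥ 1. -/
import Mathlib


noncomputable section

/-- The function `σ(r) = √(r^{2/3}+2)/r + √((r^{2/3}+2)/(r^{2/3}+1))`. -/
def sigmaFn (r : ℝ) : ℝ :=
  Real.sqrt (r ^ ((2:ℝ)/3) + 2) / r +
    Real.sqrt ((r ^ ((2:ℝ)/3) + 2) / (r ^ ((2:ℝ)/3) + 1))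

lemma sigma_anti {a b : ℝ} (ha : 0 < a) (hab : a < b) : sigmaFn b < sigmaFn a := by
  have hb : 0 < b := ha.trans hab
  set ta := a ^ ((2:ℝ)/3) with hta
  set tb := b ^ ((2:ℝ)/3) with htb
  have hta0 : 0 < ta := Real.rpow_pos_of_pos ha _
  have htb0 : 0 < tb := Real.rpow_pos_of_pos hb _
  have htlt : ta < tb := Real.rpow_lt_rpow ha.le hab (by norm_num)
  have ha2 : a ^ 2 = ta ^ 3 := by
    rw [hta, ← Real.rpow_natCast (a ^ ((2:ℝ)/3)) 3, ← Real.rpow_mul ha.le,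
      ← Real.rpow_natCast a 2]
    norm_num
  have hb2 : b ^ 2 = tb ^ 3 := by
    rw [htb, ← Real.rpow_natCast (b ^ ((2:ℝ)/3)) 3, ← Real.rpow_mul hb.le,
      ← Real.rpow_natCast b 2]
    norm_num
  have h1 : Real.sqrt (tb + 2) / b < Real.sqrt (ta + 2) / a := by
    have eb : Real.sqrt (tb + 2) / b = Real.sqrt ((tb + 2) / b ^ 2) := by
      rw [Real.sqrt_div (by positivity), Real.sqrt_sq hb.le]
    have ea : Real.sqrt (ta + 2) / a = Real.sqrt ((ta + 2) / a ^ 2) := by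
      rw [Real.sqrt_div (by positivity), Real.sqrt_sq ha.le]
    rw [eb, ea, ha2, hb2]
    apply Real.sqrt_lt_sqrt (by positivity)
    rw [div_lt_div_iff₀ (by positivity) (by positivity)]
    nlinarith [mul_pos hta0 htb0, mul_pos (mul_pos hta0 htb0) (sub_pos.2 htlt),
      sq_nonneg (ta + tb), sq_nonneg (tb - ta), mul_pos hta0 hta0, mul_pos htb0 htb0]
  have h2 : Real.sqrt ((tb + 2) / (tb + 1)) < Real.sqrt ((ta + 2) / (ta + 1)) := by
    apply Real.sqrt_lt_sqrt (by positivity)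
    rw [div_lt_div_iff₀ (by positivity) (by positivity)]
    nlinarith
  exact add_lt_add h1 h2

theorem statement8 :
    StrictAntiOn sigmaFn (Set.Ioi 0) ∧
    sigmaFn 1 = Real.sqrt 3 + Real.sqrt (3 / 2) ∧
    ∀ r : ℝ, 1 ≤ r → sigmaFn r ≤ Real.sqrt 3 + Real.sqrt (3 / 2) := by
  have h1 : sigmaFn 1 = Real.sqrt 3 + Real.sqrt (3 / 2) := by
    simp [sigmaFn, Real.one_rpow]
    norm_num
  refine ⟨fun a ha b hb hab => sigma_anti ha hab, h1, fun r hr => ?_⟩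
  rcases eq_or_lt_of_le hr with h | h
  · rw [← h, h1]
  · rw [← h1]
    exact (sigma_anti one_pos h).le
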